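/- For generic parameters (t₁ : t₂), (s₁ : s₂) ∈ ℙ¹ × ℙ¹, a point P = (x₁ : ... : x₈) on the complete intersection X ⊆ ℙ⁷ defined by q₁ = t₁(x₁²+x₂²) − t₂(x₃²+x₄²) + t₁(x₅²+x₆²) + t₂(x₇²+x₈²), q₂ = −t₂(x₁²+x₂²) + t₁(x₃²+x₄²) + t₂(x₅²+x₆²) + t₁(x₇²+x₈²), q₃ = s₁(x₁²−x₂²) − s₂(x₃²−x₄²) + s₁(x₅²−x₆²) + s₂(x₇²−x₈²), q₄ = −s₂(x₁²−x₂²) + s₁(x₃²−x₄²) + s₂(x₅²−x₆²) + s₁(x₇²−x₈²) is a singular point of X if and only if exactly four of the coordinates x₁, ..., x₈ are zero. -/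
import Mathlib

open MvPolynomial

/-- The four quadrics `q₁, q₂, q₃, q₄` of the two-parameter family (Theorem p11),
in variables `x₁, …, x₈` (indexed `X 0, …, X 7`). -/
noncomputable def qfam (t₁ t₂ s₁ s₂ : ℂ) : Fin 4 → MvPolynomial (Fin 8) ℂ :=
  ![C t₁ * (X 0 ^ 2 + X 1 ^ 2) - C t₂ * (X 2 ^ 2 + X 3 ^ 2)
      + C t₁ * (X 4 ^ 2 + X 5 ^ 2) + C t₂ * (X 6 ^ 2 + X 7 ^ 2),
    -C t₂ * (X 0 ^ 2 + X 1 ^ 2) + C t₁ * (X 2 ^ 2 + X 3 ^ 2)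
      + C t₂ * (X 4 ^ 2 + X 5 ^ 2) + C t₁ * (X 6 ^ 2 + X 7 ^ 2),
    C s₁ * (X 0 ^ 2 - X 1 ^ 2) - C s₂ * (X 2 ^ 2 - X 3 ^ 2)
      + C s₁ * (X 4 ^ 2 - X 5 ^ 2) + C s₂ * (X 6 ^ 2 - X 7 ^ 2),
    -C s₂ * (X 0 ^ 2 - X 1 ^ 2) + C s₁ * (X 2 ^ 2 - X 3 ^ 2)
      + C s₂ * (X 4 ^ 2 - X 5 ^ 2) + C s₁ * (X 6 ^ 2 - X 7 ^ 2)]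

namespace SingularAux

open Matrix

variable {α : Type*}

@[simp] lemma cv84 (a b c d e f g h : α) : ![a,b,c,d,e,f,g,h] (4:Fin 8) = e := rfl
@[simp] lemma cv85 (a b c d e f g h : α) : ![a,b,c,d,e,f,g,h] (5:Fin 8) = f := rfl
@[simp] lemma cv86 (a b c d e f g h : α) : ![a,b,c,d,e,f,g,h] (6:Fin 8) = g := rfl
@[simp] lemma cv87 (a b c d e f g h : α) : ![a,b,c,d,e,f,g,h] (7:Fin 8) = h := rfl

/-! ### pair vectors and 2×2 determinants -/

def b1v (t₁ t₂ : ℂ) : Fin 4 → ℂ := ![t₁, -t₂, t₁, t₂]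
def b2v (t₁ t₂ : ℂ) : Fin 4 → ℂ := ![-t₂, t₁, t₂, t₁]
def Dv (t₁ t₂ : ℂ) (k l : Fin 4) : ℂ :=
  b1v t₁ t₂ k * b2v t₁ t₂ l - b2v t₁ t₂ k * b1v t₁ t₂ l
def af (t₁ t₂ l0 l1 : ℂ) (k : Fin 4) : ℂ := l0 * b1v t₁ t₂ k + l1 * b2v t₁ t₂ k

lemma pluck (t₁ t₂ l0 l1 : ℂ) (k l m : Fin 4) :
    Dv t₁ t₂ l m * af t₁ t₂ l0 l1 k - Dv t₁ t₂ k m * af t₁ t₂ l0 l1 l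
      + Dv t₁ t₂ k l * af t₁ t₂ l0 l1 m = 0 := by
  simp only [Dv, af]; ring

lemma lam0_id (t₁ t₂ l0 l1 : ℂ) (k l : Fin 4) :
    l0 * Dv t₁ t₂ k l = b2v t₁ t₂ l * af t₁ t₂ l0 l1 k - b2v t₁ t₂ k * af t₁ t₂ l0 l1 l := by
  simp only [Dv, af]; ring

lemma lam1_id (t₁ t₂ l0 l1 : ℂ) (k l : Fin 4) :
    l1 * Dv t₁ t₂ k l = b1v t₁ t₂ k * af t₁ t₂ l0 l1 l - b1v t₁ t₂ l * af t₁ t₂ l0 l1 k := by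
  simp only [Dv, af]; ring

lemma kerD (t₁ t₂ : ℂ) (u : Fin 4 → ℂ)
    (h1 : u 0 * b1v t₁ t₂ 0 + u 1 * b1v t₁ t₂ 1 + u 2 * b1v t₁ t₂ 2 + u 3 * b1v t₁ t₂ 3 = 0)
    (h2 : u 0 * b2v t₁ t₂ 0 + u 1 * b2v t₁ t₂ 1 + u 2 * b2v t₁ t₂ 2 + u 3 * b2v t₁ t₂ 3 = 0)
    (m : Fin 4) :
    u 0 * Dv t₁ t₂ 0 m + u 1 * Dv t₁ t₂ 1 m + u 2 * Dv t₁ t₂ 2 m + u 3 * Dv t₁ t₂ 3 m = 0 := by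
  simp only [Dv]
  linear_combination b2v t₁ t₂ m * h1 - b1v t₁ t₂ m * h2

lemma Dv_self (t₁ t₂ : ℂ) (k : Fin 4) : Dv t₁ t₂ k k = 0 := by simp only [Dv]; ring

lemma Dv_ne (t₁ t₂ : ℂ) (h1 : t₁^2 - t₂^2 ≠ 0) (h2 : 2*t₁*t₂ ≠ 0) (h3 : t₁^2 + t₂^2 ≠ 0)
    (k l : Fin 4) (hkl : k ≠ l) : Dv t₁ t₂ k l ≠ 0 := by
  fin_cases k <;> fin_cases l <;> simp only [Dv, b1v, b2v] <;>
    first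
    | exact absurd rfl hkl
    | (simp; intro h; first
        | exact h1 (by linear_combination h)
        | exact h1 (by linear_combination -h)
        | exact h2 (by linear_combination h)
        | exact h2 (by linear_combination -h)
        | exact h3 (by linear_combination h)
        | exact h3 (by linear_combination -h))

set_option maxHeartbeats 2000000 in
lemma Mx (t₁ t₂ s₁ s₂ : ℂ)
    (c12m : (t₁^2-t₂^2)*(2*s₁*s₂) - (2*t₁*t₂)*(s₁^2-s₂^2) ≠ 0)
    (c12p : (t₁^2-t₂^2)*(2*s₁*s₂) + (2*t₁*t₂)*(s₁^2-s₂^2) ≠ 0)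
    (c13m : (t₁^2-t₂^2)*(s₁^2+s₂^2) - (t₁^2+t₂^2)*(s₁^2-s₂^2) ≠ 0)
    (c13p : (t₁^2-t₂^2)*(s₁^2+s₂^2) + (t₁^2+t₂^2)*(s₁^2-s₂^2) ≠ 0)
    (c23m : (2*t₁*t₂)*(s₁^2+s₂^2) - (t₁^2+t₂^2)*(2*s₁*s₂) ≠ 0)
    (c23p : (2*t₁*t₂)*(s₁^2+s₂^2) + (t₁^2+t₂^2)*(2*s₁*s₂) ≠ 0)
    (a b c : Fin 4) (hab : a ≠ b) (hac : a ≠ c) (hbc : b ≠ c)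
    (ε : ℂ) (hε : ε = 1 ∨ ε = -1) :
    Dv t₁ t₂ a c * Dv s₁ s₂ b c + ε * (Dv t₁ t₂ b c * Dv s₁ s₂ a c) ≠ 0 := by
  rcases hε with h | h <;> subst h <;>
  fin_cases a <;> fin_cases b <;> fin_cases c <;>
    first
    | exact absurd rfl hab
    | exact absurd rfl hac
    | exact absurd rfl hbc
    | (simp only [Dv, b1v, b2v]; simp; intro h; first
        | exact c12m (by linear_combination h)
        | exact c12m (by linear_combination -h)
        | exact c12p (by linear_combination h)
        | exact c12p (by linear_combination -h)
        | exact c13m (by linear_combination h)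
        | exact c13m (by linear_combination -h)
        | exact c13p (by linear_combination h)
        | exact c13p (by linear_combination -h)
        | exact c23m (by linear_combination h)
        | exact c23m (by linear_combination -h)
        | exact c23p (by linear_combination h)
        | exact c23p (by linear_combination -h))

lemma lam_eq_zero (t₁ t₂ l0 l1 : ℂ) (h1 : t₁^2 - t₂^2 ≠ 0) (h2 : 2*t₁*t₂ ≠ 0)
    (h3 : t₁^2 + t₂^2 ≠ 0) (x y : Fin 4) (hxy : x ≠ y)
    (hx : af t₁ t₂ l0 l1 x = 0) (hy : af t₁ t₂ l0 l1 y = 0) : l0 = 0 ∧ l1 = 0 := by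
  have d := Dv_ne t₁ t₂ h1 h2 h3 x y hxy
  constructor
  · have h := lam0_id t₁ t₂ l0 l1 x y
    rw [hx, hy] at h; simp at h
    exact h.resolve_right d
  · have h := lam1_id t₁ t₂ l0 l1 x y
    rw [hx, hy] at h; simp at h
    exact h.resolve_right d

lemma main2 (t₁ t₂ s₁ s₂ l0 l1 l2 l3 : ℂ)
    (hA1 : t₁^2-t₂^2 ≠ 0) (hA2 : 2*t₁*t₂ ≠ 0) (hA3 : t₁^2+t₂^2 ≠ 0)
    (hB1 : s₁^2-s₂^2 ≠ 0) (hB2 : 2*s₁*s₂ ≠ 0) (hB3 : s₁^2+s₂^2 ≠ 0)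
    (c12m : (t₁^2-t₂^2)*(2*s₁*s₂) - (2*t₁*t₂)*(s₁^2-s₂^2) ≠ 0)
    (c12p : (t₁^2-t₂^2)*(2*s₁*s₂) + (2*t₁*t₂)*(s₁^2-s₂^2) ≠ 0)
    (c13m : (t₁^2-t₂^2)*(s₁^2+s₂^2) - (t₁^2+t₂^2)*(s₁^2-s₂^2) ≠ 0)
    (c13p : (t₁^2-t₂^2)*(s₁^2+s₂^2) + (t₁^2+t₂^2)*(s₁^2-s₂^2) ≠ 0)
    (c23m : (2*t₁*t₂)*(s₁^2+s₂^2) - (t₁^2+t₂^2)*(2*s₁*s₂) ≠ 0)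
    (c23p : (2*t₁*t₂)*(s₁^2+s₂^2) + (t₁^2+t₂^2)*(2*s₁*s₂) ≠ 0)
    (k0 k l : Fin 4) (h01 : k0 ≠ k) (h02 : k0 ≠ l) (h12 : k ≠ l)
    (hα0 : af t₁ t₂ l0 l1 k0 = 0) (hβ0 : af s₁ s₂ l2 l3 k0 = 0)
    (δk δl : ℂ) (hδk : δk = 1 ∨ δk = -1) (hδl : δl = 1 ∨ δl = -1)
    (hk : af t₁ t₂ l0 l1 k + δk * af s₁ s₂ l2 l3 k = 0)
    (hl : af t₁ t₂ l0 l1 l + δl * af s₁ s₂ l2 l3 l = 0)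
    (hlam : ¬(l0 = 0 ∧ l1 = 0 ∧ l2 = 0 ∧ l3 = 0)) : False := by
  have hδk0 : δk ≠ 0 := by rcases hδk with rfl | rfl <;> norm_num
  have hδl0 : δl ≠ 0 := by rcases hδl with rfl | rfl <;> norm_num
  by_cases hβk : af s₁ s₂ l2 l3 k = 0
  · have hαk : af t₁ t₂ l0 l1 k = 0 := by linear_combination hk - δk * hβk
    obtain ⟨h0, h1⟩ := lam_eq_zero t₁ t₂ l0 l1 hA1 hA2 hA3 k0 k h01 hα0 hαk
    have hαl : af t₁ t₂ l0 l1 l = 0 := by simp only [af, h0, h1]; ring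
    have hβl : af s₁ s₂ l2 l3 l = 0 := by
      have h : δl * af s₁ s₂ l2 l3 l = 0 := by linear_combination hl - hαl
      exact (mul_eq_zero.mp h).resolve_left hδl0
    obtain ⟨h2', h3'⟩ := lam_eq_zero s₁ s₂ l2 l3 hB1 hB2 hB3 k0 l h02 hβ0 hβl
    exact hlam ⟨h0, h1, h2', h3'⟩
  · by_cases hβl : af s₁ s₂ l2 l3 l = 0
    · have hαl : af t₁ t₂ l0 l1 l = 0 := by linear_combination hl - δl * hβl
      obtain ⟨h0, h1⟩ := lam_eq_zero t₁ t₂ l0 l1 hA1 hA2 hA3 k0 l h02 hα0 hαl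
      have hαk : af t₁ t₂ l0 l1 k = 0 := by simp only [af, h0, h1]; ring
      have h : δk * af s₁ s₂ l2 l3 k = 0 := by linear_combination hk - hαk
      exact hβk ((mul_eq_zero.mp h).resolve_left hδk0)
    · have e1 : Dv t₁ t₂ l k0 * af t₁ t₂ l0 l1 k - Dv t₁ t₂ k k0 * af t₁ t₂ l0 l1 l = 0 := by
        linear_combination pluck t₁ t₂ l0 l1 k l k0 - Dv t₁ t₂ k l * hα0
      have e2 : Dv s₁ s₂ l k0 * af s₁ s₂ l2 l3 k - Dv s₁ s₂ k k0 * af s₁ s₂ l2 l3 l = 0 := by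
        linear_combination pluck s₁ s₂ l2 l3 k l k0 - Dv s₁ s₂ k l * hβ0
      have e3 : δk * Dv t₁ t₂ l k0 * af s₁ s₂ l2 l3 k
          - δl * Dv t₁ t₂ k k0 * af s₁ s₂ l2 l3 l = 0 := by
        linear_combination -e1 + Dv t₁ t₂ l k0 * hk - Dv t₁ t₂ k k0 * hl
      have G2 : af s₁ s₂ l2 l3 k * (af s₁ s₂ l2 l3 l *
          (δk * (Dv t₁ t₂ l k0 * Dv s₁ s₂ k k0) - δl * (Dv t₁ t₂ k k0 * Dv s₁ s₂ l k0))) = 0 := by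
        linear_combination (Dv s₁ s₂ k k0 * af s₁ s₂ l2 l3 l) * e3
          - (δl * Dv t₁ t₂ k k0 * af s₁ s₂ l2 l3 l) * e2
      have hbr := ((mul_eq_zero.mp G2).resolve_left hβk)
      have hbr2 := ((mul_eq_zero.mp hbr).resolve_left hβl)
      rcases hδk with rfl | rfl <;> rcases hδl with rfl | rfl
      · exact Mx t₁ t₂ s₁ s₂ c12m c12p c13m c13p c23m c23p l k k0 (Ne.symm h12)
          (Ne.symm h02) (Ne.symm h01) (-1) (by norm_num) (by linear_combination hbr2)
      · exact Mx t₁ t₂ s₁ s₂ c12m c12p c13m c13p c23m c23p l k k0 (Ne.symm h12)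
          (Ne.symm h02) (Ne.symm h01) 1 (by norm_num) (by linear_combination hbr2)
      · exact Mx t₁ t₂ s₁ s₂ c12m c12p c13m c13p c23m c23p l k k0 (Ne.symm h12)
          (Ne.symm h02) (Ne.symm h01) 1 (by norm_num) (by linear_combination -hbr2)
      · exact Mx t₁ t₂ s₁ s₂ c12m c12p c13m c13p c23m c23p l k k0 (Ne.symm h12)
          (Ne.symm h02) (Ne.symm h01) (-1) (by norm_num) (by linear_combination -hbr2)

lemma fin4_univ (a b c d : Fin 4) (h1 : a≠b) (h2 : a≠c) (h3 : a≠d) (h4 : b≠c) (h5 : b≠d)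
    (h6 : c≠d) : ({a,b,c,d} : Finset (Fin 4)) = Finset.univ := by
  revert h1 h2 h3 h4 h5 h6; revert a b c d; decide

lemma fin4_fourth (a b c : Fin 4) : ∃ d : Fin 4, d ≠ a ∧ d ≠ b ∧ d ≠ c := by
  revert a b c; decide

lemma kerD_sum (t₁ t₂ : ℂ) (u : Fin 4 → ℂ)
    (h1 : u 0 * b1v t₁ t₂ 0 + u 1 * b1v t₁ t₂ 1 + u 2 * b1v t₁ t₂ 2 + u 3 * b1v t₁ t₂ 3 = 0)
    (h2 : u 0 * b2v t₁ t₂ 0 + u 1 * b2v t₁ t₂ 1 + u 2 * b2v t₁ t₂ 2 + u 3 * b2v t₁ t₂ 3 = 0)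
    (m : Fin 4) : ∑ j, u j * Dv t₁ t₂ j m = 0 := by
  rw [Fin.sum_univ_four]; exact kerD t₁ t₂ u h1 h2 m

lemma kerD_extract (t₁ t₂ : ℂ) (u : Fin 4 → ℂ)
    (h1 : u 0 * b1v t₁ t₂ 0 + u 1 * b1v t₁ t₂ 1 + u 2 * b1v t₁ t₂ 2 + u 3 * b1v t₁ t₂ 3 = 0)
    (h2 : u 0 * b2v t₁ t₂ 0 + u 1 * b2v t₁ t₂ 1 + u 2 * b2v t₁ t₂ 2 + u 3 * b2v t₁ t₂ 3 = 0)
    (k0 k l m : Fin 4) (d1 : k0≠k) (d2 : k0≠l) (d3 : k0≠m) (d4 : k≠l) (d5 : k≠m) (d6 : l≠m)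
    (h0 : u k0 = 0) :
    u k * Dv t₁ t₂ k m + u l * Dv t₁ t₂ l m = 0 := by
  have K := kerD_sum t₁ t₂ u h1 h2 m
  rw [← fin4_univ k0 k l m d1 d2 d3 d4 d5 d6] at K
  rw [Finset.sum_insert (by simp [d1, d2, d3]), Finset.sum_insert (by simp [d4, d5]),
    Finset.sum_pair d6, h0, Dv_self] at K
  linear_combination K

lemma kernel_two_zero (t₁ t₂ : ℂ) (h1 : t₁^2 - t₂^2 ≠ 0) (h2 : 2*t₁*t₂ ≠ 0)
    (h3 : t₁^2 + t₂^2 ≠ 0) (u : Fin 4 → ℂ)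
    (hu1 : u 0 * b1v t₁ t₂ 0 + u 1 * b1v t₁ t₂ 1 + u 2 * b1v t₁ t₂ 2 + u 3 * b1v t₁ t₂ 3 = 0)
    (hu2 : u 0 * b2v t₁ t₂ 0 + u 1 * b2v t₁ t₂ 1 + u 2 * b2v t₁ t₂ 2 + u 3 * b2v t₁ t₂ 3 = 0)
    (a b : Fin 4) (hab : a ≠ b) (ha : u a = 0) (hb : u b = 0) : ∀ k, u k = 0 := by
  intro c
  rcases eq_or_ne c a with rfl | hca
  · exact ha
  rcases eq_or_ne c b with rfl | hcb
  · exact hb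
  obtain ⟨d, hda, hdb, hdc⟩ := fin4_fourth a b c
  have K := kerD_extract t₁ t₂ u hu1 hu2 a c b d hca.symm hab hda.symm hcb (Ne.symm hdc)
    (Ne.symm hdb) ha
  rw [hb] at K; simp at K
  rcases K with K | K
  · exact K
  · exact absurd K (Dv_ne t₁ t₂ h1 h2 h3 c d (Ne.symm hdc))

lemma main1b (t₁ t₂ s₁ s₂ : ℂ)
    (c12m : (t₁^2-t₂^2)*(2*s₁*s₂) - (2*t₁*t₂)*(s₁^2-s₂^2) ≠ 0)
    (c12p : (t₁^2-t₂^2)*(2*s₁*s₂) + (2*t₁*t₂)*(s₁^2-s₂^2) ≠ 0)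
    (c13m : (t₁^2-t₂^2)*(s₁^2+s₂^2) - (t₁^2+t₂^2)*(s₁^2-s₂^2) ≠ 0)
    (c13p : (t₁^2-t₂^2)*(s₁^2+s₂^2) + (t₁^2+t₂^2)*(s₁^2-s₂^2) ≠ 0)
    (c23m : (2*t₁*t₂)*(s₁^2+s₂^2) - (t₁^2+t₂^2)*(2*s₁*s₂) ≠ 0)
    (c23p : (2*t₁*t₂)*(s₁^2+s₂^2) + (t₁^2+t₂^2)*(2*s₁*s₂) ≠ 0)
    (u w : Fin 4 → ℂ)
    (hu1 : u 0 * b1v t₁ t₂ 0 + u 1 * b1v t₁ t₂ 1 + u 2 * b1v t₁ t₂ 2 + u 3 * b1v t₁ t₂ 3 = 0)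
    (hu2 : u 0 * b2v t₁ t₂ 0 + u 1 * b2v t₁ t₂ 1 + u 2 * b2v t₁ t₂ 2 + u 3 * b2v t₁ t₂ 3 = 0)
    (hw1 : w 0 * b1v s₁ s₂ 0 + w 1 * b1v s₁ s₂ 1 + w 2 * b1v s₁ s₂ 2 + w 3 * b1v s₁ s₂ 3 = 0)
    (hw2 : w 0 * b2v s₁ s₂ 0 + w 1 * b2v s₁ s₂ 1 + w 2 * b2v s₁ s₂ 2 + w 3 * b2v s₁ s₂ 3 = 0)
    (k0 k l m : Fin 4) (d1 : k0≠k) (d2 : k0≠l) (d3 : k0≠m) (d4 : k≠l) (d5 : k≠m) (d6 : l≠m)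
    (h0u : u k0 = 0) (h0w : w k0 = 0) (hk : u k ≠ 0) (hl : u l ≠ 0)
    (δk δl : ℂ) (hδk : δk = 1 ∨ δk = -1) (hδl : δl = 1 ∨ δl = -1)
    (hwk : w k = δk * u k) (hwl : w l = δl * u l) : False := by
  have Ku := kerD_extract t₁ t₂ u hu1 hu2 k0 k l m d1 d2 d3 d4 d5 d6 h0u
  have Kw := kerD_extract s₁ s₂ w hw1 hw2 k0 k l m d1 d2 d3 d4 d5 d6 h0w
  rw [hwk, hwl] at Kw
  have G2 : u k * (u l * (δl * (Dv t₁ t₂ k m * Dv s₁ s₂ l m)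
      - δk * (Dv t₁ t₂ l m * Dv s₁ s₂ k m))) = 0 := by
    linear_combination (Dv s₁ s₂ l m * δl * u l) * Ku - (Dv t₁ t₂ l m * u l) * Kw
  have hbr := ((mul_eq_zero.mp G2).resolve_left hk)
  have hbr2 := ((mul_eq_zero.mp hbr).resolve_left hl)
  rcases hδk with rfl | rfl <;> rcases hδl with rfl | rfl
  · exact Mx t₁ t₂ s₁ s₂ c12m c12p c13m c13p c23m c23p k l m d4 d5 d6 (-1) (by norm_num)
      (by linear_combination hbr2)
  · exact Mx t₁ t₂ s₁ s₂ c12m c12p c13m c13p c23m c23p k l m d4 d5 d6 1 (by norm_num)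
      (by linear_combination -hbr2)
  · exact Mx t₁ t₂ s₁ s₂ c12m c12p c13m c13p c23m c23p k l m d4 d5 d6 1 (by norm_num)
      (by linear_combination hbr2)
  · exact Mx t₁ t₂ s₁ s₂ c12m c12p c13m c13p c23m c23p k l m d4 d5 d6 (-1) (by norm_num)
      (by linear_combination -hbr2)

/-! ### pigeonhole lemmas -/

set_option maxHeartbeats 2000000 in
lemma pig2 (n0 n1 n2 n3 : ℕ) (h0 : n0 ≤ 2) (h1 : n1 ≤ 2) (h2 : n2 ≤ 2) (h3 : n3 ≤ 2)
    (h : 5 ≤ n0+n1+n2+n3) :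
    (n0 = 2 ∧ 1 ≤ n1 ∧ 1 ≤ n2) ∨ (n0 = 2 ∧ 1 ≤ n1 ∧ 1 ≤ n3) ∨ (n0 = 2 ∧ 1 ≤ n2 ∧ 1 ≤ n3) ∨
    (n1 = 2 ∧ 1 ≤ n0 ∧ 1 ≤ n2) ∨ (n1 = 2 ∧ 1 ≤ n0 ∧ 1 ≤ n3) ∨ (n1 = 2 ∧ 1 ≤ n2 ∧ 1 ≤ n3) ∨
    (n2 = 2 ∧ 1 ≤ n0 ∧ 1 ≤ n1) ∨ (n2 = 2 ∧ 1 ≤ n0 ∧ 1 ≤ n3) ∨ (n2 = 2 ∧ 1 ≤ n1 ∧ 1 ≤ n3) ∨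
    (n3 = 2 ∧ 1 ≤ n0 ∧ 1 ≤ n1) ∨ (n3 = 2 ∧ 1 ≤ n0 ∧ 1 ≤ n2) ∨ (n3 = 2 ∧ 1 ≤ n1 ∧ 1 ≤ n2) := by
  omega

set_option maxHeartbeats 2000000 in
lemma pig1 (z0 z1 z2 z3 : ℕ) (h0 : z0 ≤ 2) (h1 : z1 ≤ 2) (h2 : z2 ≤ 2) (h3 : z3 ≤ 2)
    (h : 5 ≤ z0+z1+z2+z3) :
    (z0 = 2 ∧ z1 = 2) ∨ (z0 = 2 ∧ z2 = 2) ∨ (z0 = 2 ∧ z3 = 2) ∨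
    (z1 = 2 ∧ z2 = 2) ∨ (z1 = 2 ∧ z3 = 2) ∨ (z2 = 2 ∧ z3 = 2) ∨
    (z0 = 2 ∧ z1 = 1 ∧ z2 = 1 ∧ z3 = 1) ∨ (z1 = 2 ∧ z0 = 1 ∧ z2 = 1 ∧ z3 = 1) ∨
    (z2 = 2 ∧ z0 = 1 ∧ z1 = 1 ∧ z3 = 1) ∨ (z3 = 2 ∧ z0 = 1 ∧ z1 = 1 ∧ z2 = 1) := by
  omega

/-! ### indicator lemmas -/

lemma ind2 {x y : ℂ} (h : (if x = 0 then (0:ℕ) else 1) + (if y = 0 then 0 else 1) = 2) :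
    x ≠ 0 ∧ y ≠ 0 := by
  constructor <;> intro h0 <;> simp [h0] at h <;> split_ifs at h <;> omega

lemma ind1 {x y : ℂ} (h : 1 ≤ (if x = 0 then (0:ℕ) else 1) + (if y = 0 then 0 else 1)) :
    x ≠ 0 ∨ y ≠ 0 := by
  by_contra hc; push_neg at hc; simp [hc.1, hc.2] at h

lemma indz2 {x y : ℂ} (h : (if x = 0 then (1:ℕ) else 0) + (if y = 0 then 1 else 0) = 2) :
    x = 0 ∧ y = 0 := by
  constructor <;> by_contra h0 <;> simp [h0] at h <;> split_ifs at h <;> omega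

lemma indz1 {x y : ℂ} (h : (if x = 0 then (1:ℕ) else 0) + (if y = 0 then 1 else 0) = 1) :
    ∃ δ : ℂ, (δ = 1 ∨ δ = -1) ∧ x^2 + y^2 ≠ 0 ∧ x^2 - y^2 = δ * (x^2 + y^2) := by
  by_cases hx : x = 0
  · by_cases hy : y = 0
    · simp [hx, hy] at h
    · refine ⟨-1, Or.inr rfl, ?_, by rw [hx]; ring⟩
      rw [hx]; simpa using pow_ne_zero 2 hy
  · by_cases hy : y = 0
    · refine ⟨1, Or.inl rfl, ?_, by rw [hy]; ring⟩
      rw [hy]; simpa using pow_ne_zero 2 hx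
    · simp [hx, hy] at h

lemma pair_zero {x y : ℂ} (h1 : x^2 + y^2 = 0) (h2 : x^2 - y^2 = 0) : x = 0 ∧ y = 0 := by
  constructor
  · have h : x^2 = 0 := by linear_combination (h1 + h2)/2
    exact sq_eq_zero_iff.mp h
  · have h : y^2 = 0 := by linear_combination (h1 - h2)/2
    exact sq_eq_zero_iff.mp h

/-! ### rank lemmas -/

lemma rank_lt_exists (M : Matrix (Fin 4) (Fin 8) ℂ) (h : M.rank < 4) :
    ∃ lam : Fin 4 → ℂ, lam ≠ 0 ∧ Matrix.vecMul lam M = 0 := by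
  by_contra hc
  push_neg at hc
  have hinj : Function.Injective Mᵀ.mulVecLin := by
    rw [← LinearMap.ker_eq_bot, LinearMap.ker_eq_bot']
    intro x hx
    by_contra hx0
    exact hc x hx0 (by rw [← Matrix.mulVec_transpose]; exact hx)
  have h4 : Mᵀ.rank = 4 := by
    have := LinearMap.finrank_range_of_inj hinj
    simpa [Matrix.rank] using this
  rw [Matrix.rank_transpose] at h4
  omega

lemma rank_le_of_cols (M : Matrix (Fin 4) (Fin 8) ℂ) (s : Finset (Fin 4 → ℂ))
    (h : ∀ j, Mᵀ j ∈ Submodule.span ℂ (s : Set (Fin 4 → ℂ))) : M.rank ≤ s.card := by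
  rw [Matrix.rank_eq_finrank_span_cols]
  refine le_trans (Submodule.finrank_mono ?_) (finrank_span_finset_le_card s)
  rw [Submodule.span_le]
  rintro x ⟨j, rfl⟩
  exact h j

/-! ### the coefficient matrix and the generic polynomial -/

def amat (t₁ t₂ s₁ s₂ : ℂ) : Fin 4 → Fin 8 → ℂ :=
  ![![t₁,t₁,-t₂,-t₂,t₁,t₁,t₂,t₂],
    ![-t₂,-t₂,t₁,t₁,t₂,t₂,t₁,t₁],
    ![s₁,-s₁,-s₂,s₂,s₁,-s₁,s₂,-s₂],
    ![-s₂,s₂,s₁,-s₁,s₂,-s₂,s₁,-s₁]]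

set_option maxHeartbeats 1000000 in
lemma jac_entry (t₁ t₂ s₁ s₂ : ℂ) (v : Fin 8 → ℂ) (i : Fin 4) (j : Fin 8) :
    eval v (pderiv j (qfam t₁ t₂ s₁ s₂ i)) = 2 * amat t₁ t₂ s₁ s₂ i j * v j := by
  fin_cases i <;> fin_cases j <;> simp [qfam, amat] <;> ring

noncomputable def Pgen : MvPolynomial (Fin 4) ℂ :=
  (X 0^2 - X 1^2) * (2*X 0*X 1) * (X 0^2 + X 1^2) *
  (X 2^2 - X 3^2) * (2*X 2*X 3) * (X 2^2 + X 3^2) *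
  ((X 0^2 - X 1^2)*(2*X 2*X 3) - (2*X 0*X 1)*(X 2^2 - X 3^2)) *
  ((X 0^2 - X 1^2)*(2*X 2*X 3) + (2*X 0*X 1)*(X 2^2 - X 3^2)) *
  ((X 0^2 - X 1^2)*(X 2^2 + X 3^2) - (X 0^2 + X 1^2)*(X 2^2 - X 3^2)) *
  ((X 0^2 - X 1^2)*(X 2^2 + X 3^2) + (X 0^2 + X 1^2)*(X 2^2 - X 3^2)) *
  ((2*X 0*X 1)*(X 2^2 + X 3^2) - (X 0^2 + X 1^2)*(2*X 2*X 3)) *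
  ((2*X 0*X 1)*(X 2^2 + X 3^2) + (X 0^2 + X 1^2)*(2*X 2*X 3))

lemma Pgen_eval (t₁ t₂ s₁ s₂ : ℂ) :
    eval ![t₁, t₂, s₁, s₂] Pgen =
    (t₁^2 - t₂^2) * (2*t₁*t₂) * (t₁^2 + t₂^2) *
    (s₁^2 - s₂^2) * (2*s₁*s₂) * (s₁^2 + s₂^2) *
    ((t₁^2 - t₂^2)*(2*s₁*s₂) - (2*t₁*t₂)*(s₁^2 - s₂^2)) *
    ((t₁^2 - t₂^2)*(2*s₁*s₂) + (2*t₁*t₂)*(s₁^2 - s₂^2)) *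
    ((t₁^2 - t₂^2)*(s₁^2 + s₂^2) - (t₁^2 + t₂^2)*(s₁^2 - s₂^2)) *
    ((t₁^2 - t₂^2)*(s₁^2 + s₂^2) + (t₁^2 + t₂^2)*(s₁^2 - s₂^2)) *
    ((2*t₁*t₂)*(s₁^2 + s₂^2) - (t₁^2 + t₂^2)*(2*s₁*s₂)) *
    ((2*t₁*t₂)*(s₁^2 + s₂^2) + (t₁^2 + t₂^2)*(2*s₁*s₂)) := by
  simp [Pgen]

lemma Pgen_ne : Pgen ≠ 0 := by
  intro h
  have h2 : eval ![1, 2, 1, 4] Pgen = 0 := by rw [h]; simp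
  rw [Pgen_eval] at h2
  norm_num at h2

end SingularAux

open Matrix SingularAux in
set_option maxHeartbeats 4000000 in
/-- For generic parameters `(t₁ : t₂), (s₁ : s₂) ∈ ℙ¹ × ℙ¹` (nonvanishing of a nonzero
polynomial in `t₁, t₂, s₁, s₂`), a point `P = (x₁ : ⋯ : x₈)` of the complete
intersection `X = {q₁ = q₂ = q₃ = q₄ = 0} ⊆ ℙ⁷` is a singular point of `X` (the 4×8
Jacobian matrix of `(q₁, q₂, q₃, q₄)` has rank `< 4` at `P`) if and only if exactly four
of the coordinates `x₁, …, x₈` vanish. -/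
theorem singular_iff_exactly_four_coordinates_zero :
    ∃ P : MvPolynomial (Fin 4) ℂ, P ≠ 0 ∧
      ∀ t₁ t₂ s₁ s₂ : ℂ, eval ![t₁, t₂, s₁, s₂] P ≠ 0 →
        ∀ v : Fin 8 → ℂ, v ≠ 0 → (∀ i, eval v (qfam t₁ t₂ s₁ s₂ i) = 0) →
          ((Matrix.of fun (i : Fin 4) (j : Fin 8) =>
              eval v (pderiv j (qfam t₁ t₂ s₁ s₂ i))).rank < 4 ↔
            {j : Fin 8 | v j = 0}.ncard = 4) := by
  classical
  refine ⟨Pgen, Pgen_ne, ?_⟩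
  intro t₁ t₂ s₁ s₂ hP v hv hq
  rw [Pgen_eval] at hP
  obtain ⟨hP, c23p⟩ := mul_ne_zero_iff.mp hP
  obtain ⟨hP, c23m⟩ := mul_ne_zero_iff.mp hP
  obtain ⟨hP, c13p⟩ := mul_ne_zero_iff.mp hP
  obtain ⟨hP, c13m⟩ := mul_ne_zero_iff.mp hP
  obtain ⟨hP, c12p⟩ := mul_ne_zero_iff.mp hP
  obtain ⟨hP, c12m⟩ := mul_ne_zero_iff.mp hP
  obtain ⟨hP, hB3⟩ := mul_ne_zero_iff.mp hP
  obtain ⟨hP, hB2⟩ := mul_ne_zero_iff.mp hP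
  obtain ⟨hP, hB1⟩ := mul_ne_zero_iff.mp hP
  obtain ⟨hP, hA3⟩ := mul_ne_zero_iff.mp hP
  obtain ⟨hA1, hA2⟩ := mul_ne_zero_iff.mp hP
  have e0 := hq 0
  have e1 := hq 1
  have e2 := hq 2
  have e3 := hq 3
  simp [qfam] at e0 e1 e2 e3
  set Uv : Fin 4 → ℂ := ![v 0^2 + v 1^2, v 2^2 + v 3^2, v 4^2 + v 5^2, v 6^2 + v 7^2]
    with hUdef
  set Wv : Fin 4 → ℂ := ![v 0^2 - v 1^2, v 2^2 - v 3^2, v 4^2 - v 5^2, v 6^2 - v 7^2]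
    with hWdef
  have hu1 : Uv 0 * b1v t₁ t₂ 0 + Uv 1 * b1v t₁ t₂ 1 + Uv 2 * b1v t₁ t₂ 2
      + Uv 3 * b1v t₁ t₂ 3 = 0 := by
    simp [hUdef, b1v]; linear_combination e0
  have hu2 : Uv 0 * b2v t₁ t₂ 0 + Uv 1 * b2v t₁ t₂ 1 + Uv 2 * b2v t₁ t₂ 2
      + Uv 3 * b2v t₁ t₂ 3 = 0 := by
    simp [hUdef, b2v]; linear_combination e1
  have hw1 : Wv 0 * b1v s₁ s₂ 0 + Wv 1 * b1v s₁ s₂ 1 + Wv 2 * b1v s₁ s₂ 2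
      + Wv 3 * b1v s₁ s₂ 3 = 0 := by
    simp [hWdef, b1v]; linear_combination e2
  have hw2 : Wv 0 * b2v s₁ s₂ 0 + Wv 1 * b2v s₁ s₂ 1 + Wv 2 * b2v s₁ s₂ 2
      + Wv 3 * b2v s₁ s₂ 3 = 0 := by
    simp [hWdef, b2v]; linear_combination e3
  set Zc := Finset.univ.filter (fun j : Fin 8 => v j = 0) with hZdef
  set Sc := Finset.univ.filter (fun j : Fin 8 => ¬ v j = 0) with hSdef
  have hZS : Zc.card + Sc.card = 8 := by
    have h := Finset.card_filter_add_card_filter_not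
      (s := (Finset.univ : Finset (Fin 8))) (p := fun j => v j = 0)
    simpa using h
  have hncard : {j : Fin 8 | v j = 0}.ncard = Zc.card := by
    rw [show {j : Fin 8 | v j = 0} = (Zc : Set (Fin 8)) by ext j; simp [hZdef]]
    exact Set.ncard_coe_finset _
  have hZcard : Zc.card = ((if v 0 = 0 then 1 else 0) + (if v 1 = 0 then 1 else 0))
      + ((if v 2 = 0 then 1 else 0) + (if v 3 = 0 then 1 else 0))
      + ((if v 4 = 0 then 1 else 0) + (if v 5 = 0 then 1 else 0))
      + ((if v 6 = 0 then 1 else 0) + (if v 7 = 0 then 1 else 0)) := by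
    rw [hZdef, Finset.card_filter, Fin.sum_univ_eight]; ring
  have hScard : Sc.card = ((if v 0 = 0 then 0 else 1) + (if v 1 = 0 then 0 else 1))
      + ((if v 2 = 0 then 0 else 1) + (if v 3 = 0 then 0 else 1))
      + ((if v 4 = 0 then 0 else 1) + (if v 5 = 0 then 0 else 1))
      + ((if v 6 = 0 then 0 else 1) + (if v 7 = 0 then 0 else 1)) := by
    rw [hSdef, Finset.card_filter, Fin.sum_univ_eight]; simp only [ite_not]; ring
  have vanish : ∀ a b : Fin 4, a ≠ b → Uv a = 0 → Uv b = 0 → Wv a = 0 → Wv b = 0 → False := by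
    intro a b hab hUa hUb hWa hWb
    have hUall := kernel_two_zero t₁ t₂ hA1 hA2 hA3 Uv hu1 hu2 a b hab hUa hUb
    have hWall := kernel_two_zero s₁ s₂ hB1 hB2 hB3 Wv hw1 hw2 a b hab hWa hWb
    have hp0 := pair_zero (by simpa [hUdef] using hUall 0) (by simpa [hWdef] using hWall 0)
    have hp1 := pair_zero (by simpa [hUdef] using hUall 1) (by simpa [hWdef] using hWall 1)
    have hp2 := pair_zero (by simpa [hUdef] using hUall 2) (by simpa [hWdef] using hWall 2)
    have hp3 := pair_zero (by simpa [hUdef] using hUall 3) (by simpa [hWdef] using hWall 3)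
    apply hv
    funext j
    simp only [Pi.zero_apply]
    fin_cases j
    exacts [hp0.1, hp0.2, hp1.1, hp1.2, hp2.1, hp2.2, hp3.1, hp3.2]
  have hZ4 : Zc.card ≤ 4 := by
    by_contra hgt
    push_neg at hgt
    rw [hZcard] at hgt
    have hle : ∀ x y : ℂ, (if x = 0 then (1:ℕ) else 0) + (if y = 0 then 1 else 0) ≤ 2 := by
      intro x y; split_ifs <;> omega
    rcases pig1 _ _ _ _ (hle _ _) (hle _ _) (hle _ _) (hle _ _) hgt with
      h | h | h | h | h | h | h | h | h | h
    · have h1 := indz2 h.1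
      have h2 := indz2 h.2
      exact vanish 0 1 (by decide) (by simp [hUdef, h1.1, h1.2]) (by simp [hUdef, h2.1, h2.2])
        (by simp [hWdef, h1.1, h1.2]) (by simp [hWdef, h2.1, h2.2])
    · have h1 := indz2 h.1
      have h2 := indz2 h.2
      exact vanish 0 2 (by decide) (by simp [hUdef, h1.1, h1.2]) (by simp [hUdef, h2.1, h2.2])
        (by simp [hWdef, h1.1, h1.2]) (by simp [hWdef, h2.1, h2.2])
    · have h1 := indz2 h.1
      have h2 := indz2 h.2
      exact vanish 0 3 (by decide) (by simp [hUdef, h1.1, h1.2]) (by simp [hUdef, h2.1, h2.2])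
        (by simp [hWdef, h1.1, h1.2]) (by simp [hWdef, h2.1, h2.2])
    · have h1 := indz2 h.1
      have h2 := indz2 h.2
      exact vanish 1 2 (by decide) (by simp [hUdef, h1.1, h1.2]) (by simp [hUdef, h2.1, h2.2])
        (by simp [hWdef, h1.1, h1.2]) (by simp [hWdef, h2.1, h2.2])
    · have h1 := indz2 h.1
      have h2 := indz2 h.2
      exact vanish 1 3 (by decide) (by simp [hUdef, h1.1, h1.2]) (by simp [hUdef, h2.1, h2.2])
        (by simp [hWdef, h1.1, h1.2]) (by simp [hWdef, h2.1, h2.2])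
    · have h1 := indz2 h.1
      have h2 := indz2 h.2
      exact vanish 2 3 (by decide) (by simp [hUdef, h1.1, h1.2]) (by simp [hUdef, h2.1, h2.2])
        (by simp [hWdef, h1.1, h1.2]) (by simp [hWdef, h2.1, h2.2])
    · obtain ⟨hz, ho1, ho2, _⟩ := h
      obtain ⟨hza, hzb⟩ := indz2 hz
      obtain ⟨δ1, hδ1, hUne1, hW1⟩ := indz1 ho1
      obtain ⟨δ2, hδ2, hUne2, hW2⟩ := indz1 ho2
      exact main1b t₁ t₂ s₁ s₂ c12m c12p c13m c13p c23m c23p Uv Wv hu1 hu2 hw1 hw2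
        0 1 2 3 (by decide) (by decide) (by decide) (by decide) (by decide) (by decide)
        (by simp [hUdef, hza, hzb]) (by simp [hWdef, hza, hzb])
        (by simpa [hUdef] using hUne1) (by simpa [hUdef] using hUne2)
        δ1 δ2 hδ1 hδ2 (by simp [hUdef, hWdef]; linear_combination hW1)
        (by simp [hUdef, hWdef]; linear_combination hW2)
    · obtain ⟨hz, ho1, ho2, _⟩ := h
      obtain ⟨hza, hzb⟩ := indz2 hz
      obtain ⟨δ1, hδ1, hUne1, hW1⟩ := indz1 ho1
      obtain ⟨δ2, hδ2, hUne2, hW2⟩ := indz1 ho2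
      exact main1b t₁ t₂ s₁ s₂ c12m c12p c13m c13p c23m c23p Uv Wv hu1 hu2 hw1 hw2
        1 0 2 3 (by decide) (by decide) (by decide) (by decide) (by decide) (by decide)
        (by simp [hUdef, hza, hzb]) (by simp [hWdef, hza, hzb])
        (by simpa [hUdef] using hUne1) (by simpa [hUdef] using hUne2)
        δ1 δ2 hδ1 hδ2 (by simp [hUdef, hWdef]; linear_combination hW1)
        (by simp [hUdef, hWdef]; linear_combination hW2)
    · obtain ⟨hz, ho1, ho2, _⟩ := h
      obtain ⟨hza, hzb⟩ := indz2 hz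
      obtain ⟨δ1, hδ1, hUne1, hW1⟩ := indz1 ho1
      obtain ⟨δ2, hδ2, hUne2, hW2⟩ := indz1 ho2
      exact main1b t₁ t₂ s₁ s₂ c12m c12p c13m c13p c23m c23p Uv Wv hu1 hu2 hw1 hw2
        2 0 1 3 (by decide) (by decide) (by decide) (by decide) (by decide) (by decide)
        (by simp [hUdef, hza, hzb]) (by simp [hWdef, hza, hzb])
        (by simpa [hUdef] using hUne1) (by simpa [hUdef] using hUne2)
        δ1 δ2 hδ1 hδ2 (by simp [hUdef, hWdef]; linear_combination hW1)
        (by simp [hUdef, hWdef]; linear_combination hW2)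
    · obtain ⟨hz, ho1, ho2, _⟩ := h
      obtain ⟨hza, hzb⟩ := indz2 hz
      obtain ⟨δ1, hδ1, hUne1, hW1⟩ := indz1 ho1
      obtain ⟨δ2, hδ2, hUne2, hW2⟩ := indz1 ho2
      exact main1b t₁ t₂ s₁ s₂ c12m c12p c13m c13p c23m c23p Uv Wv hu1 hu2 hw1 hw2
        3 0 1 2 (by decide) (by decide) (by decide) (by decide) (by decide) (by decide)
        (by simp [hUdef, hza, hzb]) (by simp [hWdef, hza, hzb])
        (by simpa [hUdef] using hUne1) (by simpa [hUdef] using hUne2)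
        δ1 δ2 hδ1 hδ2 (by simp [hUdef, hWdef]; linear_combination hW1)
        (by simp [hUdef, hWdef]; linear_combination hW2)
  rw [hncard]
  constructor
  · intro hrank
    obtain ⟨lam, hlam0, hmul⟩ := rank_lt_exists _ hrank
    have hcv : ∀ j : Fin 8, (lam 0 * amat t₁ t₂ s₁ s₂ 0 j + lam 1 * amat t₁ t₂ s₁ s₂ 1 j
        + lam 2 * amat t₁ t₂ s₁ s₂ 2 j + lam 3 * amat t₁ t₂ s₁ s₂ 3 j) * v j = 0 := by
      intro j
      have h := congrFun hmul j
      simp only [Matrix.vecMul, dotProduct, Fin.sum_univ_four, Matrix.of_apply,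
        Pi.zero_apply, jac_entry] at h
      linear_combination h / 2
    have hlam' : ¬(lam 0 = 0 ∧ lam 1 = 0 ∧ lam 2 = 0 ∧ lam 3 = 0) := by
      rintro ⟨h0, h1, h2, h3⟩
      apply hlam0
      funext i
      fin_cases i <;> simpa
    have hcol : ∀ j : Fin 8, v j ≠ 0 → lam 0 * amat t₁ t₂ s₁ s₂ 0 j
        + lam 1 * amat t₁ t₂ s₁ s₂ 1 j + lam 2 * amat t₁ t₂ s₁ s₂ 2 j
        + lam 3 * amat t₁ t₂ s₁ s₂ 3 j = 0 :=
      fun j hj => (mul_eq_zero.mp (hcv j)).resolve_right hj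
    have hfull0 : v 0 ≠ 0 → v 1 ≠ 0 →
        af t₁ t₂ (lam 0) (lam 1) 0 = 0 ∧ af s₁ s₂ (lam 2) (lam 3) 0 = 0 := by
      intro ha hb
      have h1 := hcol 0 ha; have h2 := hcol 1 hb
      simp [amat] at h1 h2
      refine ⟨?_, ?_⟩ <;> simp [af, b1v, b2v]
      · linear_combination (h1 + h2) / 2
      · linear_combination (h1 - h2) / 2
    have hfull1 : v 2 ≠ 0 → v 3 ≠ 0 →
        af t₁ t₂ (lam 0) (lam 1) 1 = 0 ∧ af s₁ s₂ (lam 2) (lam 3) 1 = 0 := by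
      intro ha hb
      have h1 := hcol 2 ha; have h2 := hcol 3 hb
      simp [amat] at h1 h2
      refine ⟨?_, ?_⟩ <;> simp [af, b1v, b2v]
      · linear_combination (h1 + h2) / 2
      · linear_combination (h1 - h2) / 2
    have hfull2 : v 4 ≠ 0 → v 5 ≠ 0 →
        af t₁ t₂ (lam 0) (lam 1) 2 = 0 ∧ af s₁ s₂ (lam 2) (lam 3) 2 = 0 := by
      intro ha hb
      have h1 := hcol 4 ha; have h2 := hcol 5 hb
      simp [amat] at h1 h2
      refine ⟨?_, ?_⟩ <;> simp [af, b1v, b2v]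
      · linear_combination (h1 + h2) / 2
      · linear_combination (h1 - h2) / 2
    have hfull3 : v 6 ≠ 0 → v 7 ≠ 0 →
        af t₁ t₂ (lam 0) (lam 1) 3 = 0 ∧ af s₁ s₂ (lam 2) (lam 3) 3 = 0 := by
      intro ha hb
      have h1 := hcol 6 ha; have h2 := hcol 7 hb
      simp [amat] at h1 h2
      refine ⟨?_, ?_⟩ <;> simp [af, b1v, b2v]
      · linear_combination (h1 + h2) / 2
      · linear_combination (h1 - h2) / 2
    have hone0 : v 0 ≠ 0 ∨ v 1 ≠ 0 → ∃ δ : ℂ, (δ = 1 ∨ δ = -1) ∧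
        af t₁ t₂ (lam 0) (lam 1) 0 + δ * af s₁ s₂ (lam 2) (lam 3) 0 = 0 := by
      rintro (ha | ha)
      · refine ⟨1, Or.inl rfl, ?_⟩
        have h1 := hcol 0 ha; simp [amat] at h1; simp [af, b1v, b2v]; linear_combination h1
      · refine ⟨-1, Or.inr rfl, ?_⟩
        have h1 := hcol 1 ha; simp [amat] at h1; simp [af, b1v, b2v]; linear_combination h1
    have hone1 : v 2 ≠ 0 ∨ v 3 ≠ 0 → ∃ δ : ℂ, (δ = 1 ∨ δ = -1) ∧
        af t₁ t₂ (lam 0) (lam 1) 1 + δ * af s₁ s₂ (lam 2) (lam 3) 1 = 0 := by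
      rintro (ha | ha)
      · refine ⟨1, Or.inl rfl, ?_⟩
        have h1 := hcol 2 ha; simp [amat] at h1; simp [af, b1v, b2v]; linear_combination h1
      · refine ⟨-1, Or.inr rfl, ?_⟩
        have h1 := hcol 3 ha; simp [amat] at h1; simp [af, b1v, b2v]; linear_combination h1
    have hone2 : v 4 ≠ 0 ∨ v 5 ≠ 0 → ∃ δ : ℂ, (δ = 1 ∨ δ = -1) ∧
        af t₁ t₂ (lam 0) (lam 1) 2 + δ * af s₁ s₂ (lam 2) (lam 3) 2 = 0 := by
      rintro (ha | ha)
      · refine ⟨1, Or.inl rfl, ?_⟩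
        have h1 := hcol 4 ha; simp [amat] at h1; simp [af, b1v, b2v]; linear_combination h1
      · refine ⟨-1, Or.inr rfl, ?_⟩
        have h1 := hcol 5 ha; simp [amat] at h1; simp [af, b1v, b2v]; linear_combination h1
    have hone3 : v 6 ≠ 0 ∨ v 7 ≠ 0 → ∃ δ : ℂ, (δ = 1 ∨ δ = -1) ∧
        af t₁ t₂ (lam 0) (lam 1) 3 + δ * af s₁ s₂ (lam 2) (lam 3) 3 = 0 := by
      rintro (ha | ha)
      · refine ⟨1, Or.inl rfl, ?_⟩
        have h1 := hcol 6 ha; simp [amat] at h1; simp [af, b1v, b2v]; linear_combination h1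
      · refine ⟨-1, Or.inr rfl, ?_⟩
        have h1 := hcol 7 ha; simp [amat] at h1; simp [af, b1v, b2v]; linear_combination h1
    have hS4 : Sc.card ≤ 4 := by
      by_contra hgt
      push_neg at hgt
      rw [hScard] at hgt
      have hle : ∀ x y : ℂ, (if x = 0 then (0:ℕ) else 1) + (if y = 0 then 0 else 1) ≤ 2 := by
        intro x y; split_ifs <;> omega
      rcases pig2 _ _ _ _ (hle _ _) (hle _ _) (hle _ _) (hle _ _) hgt with
        h | h | h | h | h | h | h | h | h | h | h | h
      · obtain ⟨ha, hb⟩ := ind2 h.1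
        obtain ⟨hα, hβ⟩ := hfull0 ha hb
        obtain ⟨δ1, hδ1, he1⟩ := hone1 (ind1 h.2.1)
        obtain ⟨δ2, hδ2, he2⟩ := hone2 (ind1 h.2.2)
        exact main2 t₁ t₂ s₁ s₂ (lam 0) (lam 1) (lam 2) (lam 3) hA1 hA2 hA3 hB1 hB2 hB3
          c12m c12p c13m c13p c23m c23p 0 1 2 (by decide) (by decide) (by decide)
          hα hβ δ1 δ2 hδ1 hδ2 he1 he2 hlam'
      · obtain ⟨ha, hb⟩ := ind2 h.1
        obtain ⟨hα, hβ⟩ := hfull0 ha hb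
        obtain ⟨δ1, hδ1, he1⟩ := hone1 (ind1 h.2.1)
        obtain ⟨δ2, hδ2, he2⟩ := hone3 (ind1 h.2.2)
        exact main2 t₁ t₂ s₁ s₂ (lam 0) (lam 1) (lam 2) (lam 3) hA1 hA2 hA3 hB1 hB2 hB3
          c12m c12p c13m c13p c23m c23p 0 1 3 (by decide) (by decide) (by decide)
          hα hβ δ1 δ2 hδ1 hδ2 he1 he2 hlam'
      · obtain ⟨ha, hb⟩ := ind2 h.1
        obtain ⟨hα, hβ⟩ := hfull0 ha hb
        obtain ⟨δ1, hδ1, he1⟩ := hone2 (ind1 h.2.1)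
        obtain ⟨δ2, hδ2, he2⟩ := hone3 (ind1 h.2.2)
        exact main2 t₁ t₂ s₁ s₂ (lam 0) (lam 1) (lam 2) (lam 3) hA1 hA2 hA3 hB1 hB2 hB3
          c12m c12p c13m c13p c23m c23p 0 2 3 (by decide) (by decide) (by decide)
          hα hβ δ1 δ2 hδ1 hδ2 he1 he2 hlam'
      · obtain ⟨ha, hb⟩ := ind2 h.1
        obtain ⟨hα, hβ⟩ := hfull1 ha hb
        obtain ⟨δ1, hδ1, he1⟩ := hone0 (ind1 h.2.1)
        obtain ⟨δ2, hδ2, he2⟩ := hone2 (ind1 h.2.2)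
        exact main2 t₁ t₂ s₁ s₂ (lam 0) (lam 1) (lam 2) (lam 3) hA1 hA2 hA3 hB1 hB2 hB3
          c12m c12p c13m c13p c23m c23p 1 0 2 (by decide) (by decide) (by decide)
          hα hβ δ1 δ2 hδ1 hδ2 he1 he2 hlam'
      · obtain ⟨ha, hb⟩ := ind2 h.1
        obtain ⟨hα, hβ⟩ := hfull1 ha hb
        obtain ⟨δ1, hδ1, he1⟩ := hone0 (ind1 h.2.1)
        obtain ⟨δ2, hδ2, he2⟩ := hone3 (ind1 h.2.2)
        exact main2 t₁ t₂ s₁ s₂ (lam 0) (lam 1) (lam 2) (lam 3) hA1 hA2 hA3 hB1 hB2 hB3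
          c12m c12p c13m c13p c23m c23p 1 0 3 (by decide) (by decide) (by decide)
          hα hβ δ1 δ2 hδ1 hδ2 he1 he2 hlam'
      · obtain ⟨ha, hb⟩ := ind2 h.1
        obtain ⟨hα, hβ⟩ := hfull1 ha hb
        obtain ⟨δ1, hδ1, he1⟩ := hone2 (ind1 h.2.1)
        obtain ⟨δ2, hδ2, he2⟩ := hone3 (ind1 h.2.2)
        exact main2 t₁ t₂ s₁ s₂ (lam 0) (lam 1) (lam 2) (lam 3) hA1 hA2 hA3 hB1 hB2 hB3
          c12m c12p c13m c13p c23m c23p 1 2 3 (by decide) (by decide) (by decide)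
          hα hβ δ1 δ2 hδ1 hδ2 he1 he2 hlam'
      · obtain ⟨ha, hb⟩ := ind2 h.1
        obtain ⟨hα, hβ⟩ := hfull2 ha hb
        obtain ⟨δ1, hδ1, he1⟩ := hone0 (ind1 h.2.1)
        obtain ⟨δ2, hδ2, he2⟩ := hone1 (ind1 h.2.2)
        exact main2 t₁ t₂ s₁ s₂ (lam 0) (lam 1) (lam 2) (lam 3) hA1 hA2 hA3 hB1 hB2 hB3
          c12m c12p c13m c13p c23m c23p 2 0 1 (by decide) (by decide) (by decide)
          hα hβ δ1 δ2 hδ1 hδ2 he1 he2 hlam'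
      · obtain ⟨ha, hb⟩ := ind2 h.1
        obtain ⟨hα, hβ⟩ := hfull2 ha hb
        obtain ⟨δ1, hδ1, he1⟩ := hone0 (ind1 h.2.1)
        obtain ⟨δ2, hδ2, he2⟩ := hone3 (ind1 h.2.2)
        exact main2 t₁ t₂ s₁ s₂ (lam 0) (lam 1) (lam 2) (lam 3) hA1 hA2 hA3 hB1 hB2 hB3
          c12m c12p c13m c13p c23m c23p 2 0 3 (by decide) (by decide) (by decide)
          hα hβ δ1 δ2 hδ1 hδ2 he1 he2 hlam'
      · obtain ⟨ha, hb⟩ := ind2 h.1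
        obtain ⟨hα, hβ⟩ := hfull2 ha hb
        obtain ⟨δ1, hδ1, he1⟩ := hone1 (ind1 h.2.1)
        obtain ⟨δ2, hδ2, he2⟩ := hone3 (ind1 h.2.2)
        exact main2 t₁ t₂ s₁ s₂ (lam 0) (lam 1) (lam 2) (lam 3) hA1 hA2 hA3 hB1 hB2 hB3
          c12m c12p c13m c13p c23m c23p 2 1 3 (by decide) (by decide) (by decide)
          hα hβ δ1 δ2 hδ1 hδ2 he1 he2 hlam'
      · obtain ⟨ha, hb⟩ := ind2 h.1
        obtain ⟨hα, hβ⟩ := hfull3 ha hb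
        obtain ⟨δ1, hδ1, he1⟩ := hone0 (ind1 h.2.1)
        obtain ⟨δ2, hδ2, he2⟩ := hone1 (ind1 h.2.2)
        exact main2 t₁ t₂ s₁ s₂ (lam 0) (lam 1) (lam 2) (lam 3) hA1 hA2 hA3 hB1 hB2 hB3
          c12m c12p c13m c13p c23m c23p 3 0 1 (by decide) (by decide) (by decide)
          hα hβ δ1 δ2 hδ1 hδ2 he1 he2 hlam'
      · obtain ⟨ha, hb⟩ := ind2 h.1
        obtain ⟨hα, hβ⟩ := hfull3 ha hb
        obtain ⟨δ1, hδ1, he1⟩ := hone0 (ind1 h.2.1)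
        obtain ⟨δ2, hδ2, he2⟩ := hone2 (ind1 h.2.2)
        exact main2 t₁ t₂ s₁ s₂ (lam 0) (lam 1) (lam 2) (lam 3) hA1 hA2 hA3 hB1 hB2 hB3
          c12m c12p c13m c13p c23m c23p 3 0 2 (by decide) (by decide) (by decide)
          hα hβ δ1 δ2 hδ1 hδ2 he1 he2 hlam'
      · obtain ⟨ha, hb⟩ := ind2 h.1
        obtain ⟨hα, hβ⟩ := hfull3 ha hb
        obtain ⟨δ1, hδ1, he1⟩ := hone1 (ind1 h.2.1)
        obtain ⟨δ2, hδ2, he2⟩ := hone2 (ind1 h.2.2)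
        exact main2 t₁ t₂ s₁ s₂ (lam 0) (lam 1) (lam 2) (lam 3) hA1 hA2 hA3 hB1 hB2 hB3
          c12m c12p c13m c13p c23m c23p 3 1 2 (by decide) (by decide) (by decide)
          hα hβ δ1 δ2 hδ1 hδ2 he1 he2 hlam'
    omega
  · intro hZc4
    have hne : Sc.Nonempty := Finset.card_pos.mp (by omega)
    obtain ⟨j₀, hj₀⟩ := hne
    have hvj₀ : v j₀ ≠ 0 := by
      have := Finset.mem_filter.mp (hSdef ▸ hj₀)
      exact this.2
    set M : Matrix (Fin 4) (Fin 8) ℂ :=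
      (Matrix.of fun i j => eval v (pderiv j (qfam t₁ t₂ s₁ s₂ i))) with hMdef
    have hMcol : ∀ j i, Mᵀ j i = 2 * amat t₁ t₂ s₁ s₂ i j * v j := by
      intro j i
      simp [hMdef, Matrix.transpose_apply, Matrix.of_apply, jac_entry]
    have hzero : ∀ j, v j = 0 → Mᵀ j = 0 := by
      intro j hj
      funext i
      simp only [Pi.zero_apply]
      rw [hMcol j i, hj]
      ring
    set T := Sc.erase j₀ with hTdef
    have hTcard : T.card = 3 := by
      rw [hTdef, Finset.card_erase_of_mem hj₀]
      omega
    set sIm := T.image (fun j => Mᵀ j) with hsdef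
    have hsum : ∑ j : Fin 8, v j • Mᵀ j = 0 := by
      funext i
      simp only [Finset.sum_apply, Pi.smul_apply, smul_eq_mul, Pi.zero_apply]
      rw [Fin.sum_univ_eight]
      simp only [hMcol]
      fin_cases i <;> simp [amat]
      · linear_combination 2 * e0
      · linear_combination 2 * e1
      · linear_combination 2 * e2
      · linear_combination 2 * e3
    have hsc : ∑ j ∈ Sc, v j • Mᵀ j = 0 := by
      refine Eq.trans (Finset.sum_subset (Finset.subset_univ _) ?_) hsum
      intro x _ hx
      have hvx : v x = 0 := by
        by_contra hxx
        exact hx (by simp [hSdef, hxx])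
      rw [hvx, zero_smul]
    have hSc_ins : Sc = insert j₀ T := (Finset.insert_erase hj₀).symm
    rw [hSc_ins, Finset.sum_insert (Finset.notMem_erase _ _)] at hsc
    have hspan : ∀ j : Fin 8, Mᵀ j ∈ Submodule.span ℂ (sIm : Set (Fin 4 → ℂ)) := by
      intro j
      by_cases hj : v j = 0
      · rw [hzero j hj]
        exact Submodule.zero_mem _
      rcases eq_or_ne j j₀ with rfl | hjj
      · have heq : Mᵀ j = (v j)⁻¹ • (-(∑ x ∈ T, v x • Mᵀ x)) := by
          rw [eq_inv_smul_iff₀ hvj₀]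
          exact eq_neg_of_add_eq_zero_left hsc
        rw [heq]
        refine Submodule.smul_mem _ _ (Submodule.neg_mem _ (Submodule.sum_mem _ ?_))
        intro c hc
        exact Submodule.smul_mem _ _
          (Submodule.subset_span (Finset.mem_coe.mpr (Finset.mem_image_of_mem _ hc)))
      · refine Submodule.subset_span (Finset.mem_coe.mpr (Finset.mem_image_of_mem _ ?_))
        rw [hTdef]
        exact Finset.mem_erase.mpr ⟨hjj, by simp [hSdef, hj]⟩
    have hr := rank_le_of_cols M sIm hspan
    have hcards : sIm.card ≤ 3 := le_trans Finset.card_image_le (le_of_eq hTcard)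
    omega
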